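/- arXiv:1107.1436 — 2 statements merged into one kernel-verified Lean document; each statement's English description precedes it below -/
import Mathlib

section
/- Let 𝒫 be an (m+1)-stable (m+1)-pattern and let π = γ_{m,m+1} ∈ Π(m+1,m). If 𝒫_π ∩ H^m_{1,1} = H^m_{1,e} for some integer e with 3 ≤ e ≤ m, then 𝒫 ∩ H^{m+1}_{1,1} = H^{m+1}_{1,e+1}. If in addition m⃗ ∈ 𝒫_π, then {1,…,m+1} ∈ 𝒫. -/
open Finset

/-- `vec m` is the set `{1, …, m}`. -/
def vec (m : ℕ) : Finset ℕ := Finset.Icc 1 m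

/-- `IsNOP s k C` : `C 1, …, C k` form a naturally ordered partition of `{1, …, s}`
into `k` nonempty sets. -/
def IsNOP (s k : ℕ) (C : ℕ → Finset ℕ) : Prop :=
  (∀ i ∈ Finset.Icc 1 k, (C i).Nonempty) ∧
  (∀ i ∈ Finset.Icc 1 k, ∀ j ∈ Finset.Icc 1 k, i ≠ j → Disjoint (C i) (C j)) ∧
  (Finset.Icc 1 k).biUnion C = Finset.Icc 1 s ∧
  (∀ i ∈ Finset.Icc 1 k, ∀ j ∈ Finset.Icc 1 k, i < j → (C i).min < (C j).min)

/-- The induced subset `P_γ`. -/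
def indSet (C : ℕ → Finset ℕ) (k : ℕ) (P : Finset ℕ) : Finset ℕ :=
  (Finset.Icc 1 k).filter fun j => ((C j) ∩ P).Nonempty

/-- The induced pattern `𝒫_γ`. -/
def indPat (C : ℕ → Finset ℕ) (k : ℕ) (P : Set (Finset ℕ)) : Set (Finset ℕ) :=
  indSet C k '' P

/-- An `m`-pattern: a nonempty collection of nonempty subsets of `{1, …, m}`. -/
def IsPattern (m : ℕ) (P : Set (Finset ℕ)) : Prop :=
  P.Nonempty ∧ ∀ Q ∈ P, Finset.Nonempty Q ∧ Q ⊆ vec m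

/-- `k`-stability of an `m`-pattern. -/
def IsStable (m k : ℕ) (P : Set (Finset ℕ)) : Prop :=
  ∀ k', 2 ≤ k' → k' ≤ k → ∀ α β : ℕ → Finset ℕ,
    IsNOP m k' α → IsNOP m k' β → indPat α k' P = indPat β k' P

/-- `φ_m = {{1},{1,2},…,{1,…,m}}`. -/
def phiPat (m : ℕ) : Set (Finset ℕ) :=
  { S | ∃ l, 1 ≤ l ∧ l ≤ m ∧ S = Finset.Icc 1 l }

/-- `A_{j,m}`: nonempty subsets of `{1,…,m}` of cardinality at most `j`. -/
def APat (j m : ℕ) : Set (Finset ℕ) :=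
  { S | S.Nonempty ∧ S ⊆ vec m ∧ S.card ≤ j }

/-- `A¹_{j,m}`: subsets of `{1,…,m}` of cardinality at most `j` containing `1`. -/
def A1Pat (j m : ℕ) : Set (Finset ℕ) :=
  { S | 1 ∈ S ∧ S ⊆ vec m ∧ S.card ≤ j }

/-- `H^m_{h,l}`: complements in `{1,…,m}` of a set of `h` holes, all lying in `[l,m]`. -/
def HPat (m h l : ℕ) : Set (Finset ℕ) :=
  { S | ∃ D : Finset ℕ, D.card = h ∧ D ⊆ Finset.Icc l m ∧ S = vec m \ D }

/-- `EH^m_{h,l}`: complements in `{1,…,m}` of a set of `h` holes, all in `[l,m]`,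
whose first hole equals `l`. -/
def EHPat (m h l : ℕ) : Set (Finset ℕ) :=
  { S | ∃ D : Finset ℕ, D.card = h ∧ D ⊆ Finset.Icc l m ∧ l ∈ D ∧ S = vec m \ D }

/-- `D^m_{r,s} = A¹_{m-r-1,m} ∪ ⋃_{h=1}^{r} H^m_{h,s-h+1} ∪ {m⃗}`. -/
def DPat (m r s : ℕ) : Set (Finset ℕ) :=
  A1Pat (m - r - 1) m ∪ (⋃ h ∈ Finset.Icc 1 r, HPat m h (s - h + 1)) ∪ {vec m}

/-- `γ_{i,j} ∈ Π(m+1,m)` (for `1 ≤ i < j ≤ m+1`): the naturally ordered partition of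
`{1,…,m+1}` into `m` blocks, namely `{i,j}` together with the singletons of the
remaining points. -/
def gammaIJ (i j : ℕ) : ℕ → Finset ℕ :=
  fun t => if t = i then {i, j} else if t < j then {t} else {t + 1}

/-- A hereditary `m`-stable `m`-pattern. -/
def IsHSP (m : ℕ) (P : Set (Finset ℕ)) : Prop :=
  IsPattern m P ∧ IsStable m m P ∧
  ∀ m', m < m' → ∃ Q : Set (Finset ℕ), IsPattern m' Q ∧ IsStable m' m' Q ∧
    ∀ γ : ℕ → Finset ℕ, IsNOP m' m γ → indPat γ m Q = P

/-- Unique stable lifts. -/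
def HasUSL (m : ℕ) (P : Set (Finset ℕ)) : Prop :=
  ∀ m', m < m' → ∃! Q : Set (Finset ℕ),
    IsPattern m' Q ∧ IsStable m' m' Q ∧
    ∀ γ : ℕ → Finset ℕ, IsNOP m' m γ → indPat γ m Q = P

/-!
By stability, the induced `m`-pattern `𝒫_π` is also `𝒫_γ` for every `γ = γ_{a,b}`, so the
hypothesis says exactly which one-hole sets `m⃗ ∖ {c}` it contains (those with `c ≥ e`).
Merging two points other than the hole sends `{1,…,m+1} ∖ {d}` to a one-hole set with hole
`d` or `d - 1`; choosing `π` for `d ≤ 2` and `γ_{1,2}` for `d ≥ 3` excludes every `d ≤ e`.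
Conversely, a preimage under `γ_{1,2}` of `m⃗ ∖ {d - 1}` (resp. of `m⃗`) is `{1,…,m+1} ∖ {d}`
(resp. `{1,…,m+1}`), possibly with one extra hole at `1` or `2`; such an extra hole `a` is
ruled out because merging it with the other hole gives `m⃗ ∖ {a}`, and `a < e`.
-/

lemma mem_gammaIJ {a b t x : ℕ} :
    x ∈ gammaIJ a b t ↔ if t = a then x = a ∨ x = b else if t < b then x = t else x = t + 1 := by
  unfold gammaIJ
  split_ifs <;> simp

lemma min_gammaIJ {a b t : ℕ} (hab : a < b) :
    (gammaIJ a b t).min = ((if t < b then t else t + 1 : ℕ) : WithTop ℕ) := by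
  unfold gammaIJ
  split_ifs with hta htb <;> try rfl
  · rw [hta, Finset.min_insert, Finset.min_singleton, min_eq_left (by exact_mod_cast hab.le)]
    rfl
  · omega

lemma isNOP_gammaIJ {m a b : ℕ} (ha : 1 ≤ a) (hab : a < b) (hb : b ≤ m + 1) :
    IsNOP (m + 1) m (gammaIJ a b) := by
  refine ⟨fun i _ => ?_, fun i hi j hj hij => ?_, ?_, fun i hi j hj hij => ?_⟩
  · unfold gammaIJ
    split_ifs <;> simp
  · simp only [Finset.mem_Icc] at hi hj
    rw [Finset.disjoint_left]
    intro x hxi hxj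
    rw [mem_gammaIJ] at hxi hxj
    split_ifs at hxi hxj <;> omega
  · ext x
    simp only [Finset.mem_biUnion, Finset.mem_Icc, mem_gammaIJ]
    constructor
    · rintro ⟨t, ht, hx⟩
      split_ifs at hx <;> omega
    · intro hx
      refine ⟨if x = b then a else if x < b then x else x - 1, ?_⟩
      split_ifs <;> omega
  · rw [min_gammaIJ hab, min_gammaIJ hab]
    norm_cast
    split_ifs <;> omega

lemma mem_indSet_gammaIJ {m a b t : ℕ} {Q : Finset ℕ} :
    t ∈ indSet (gammaIJ a b) m Q ↔ t ∈ Finset.Icc 1 m ∧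
      if t = a then a ∈ Q ∨ b ∈ Q else if t < b then t ∈ Q else t + 1 ∈ Q := by
  rw [indSet, Finset.mem_filter]
  unfold gammaIJ
  split_ifs <;> simp [Finset.Nonempty]

lemma indSet_gammaIJ_compl_singleton_of_lt {m a b d : ℕ} (hda : d ≠ a) (hdb : d < b) :
    indSet (gammaIJ a b) m (vec (m + 1) \ {d}) = vec m \ {d} := by
  ext t
  simp only [mem_indSet_gammaIJ, vec, Finset.mem_sdiff, Finset.mem_Icc, Finset.mem_singleton]
  split_ifs <;> omega

lemma indSet_gammaIJ_compl_singleton_of_gt {m a b d : ℕ} (hab : a < b) (hbd : b < d)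
    (hdm : d ≤ m + 1) :
    indSet (gammaIJ a b) m (vec (m + 1) \ {d}) = vec m \ {d - 1} := by
  ext t
  simp only [mem_indSet_gammaIJ, vec, Finset.mem_sdiff, Finset.mem_Icc, Finset.mem_singleton]
  split_ifs <;> omega

lemma indSet_gammaIJ_compl_pair {m a b : ℕ} (hab : a < b) :
    indSet (gammaIJ a b) m (vec (m + 1) \ {a, b}) = vec m \ {a} := by
  ext t
  simp only [mem_indSet_gammaIJ, vec, Finset.mem_sdiff, Finset.mem_Icc, Finset.mem_singleton,
    Finset.mem_insert]
  split_ifs with hta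
  · simp [hta]
  all_goals omega

lemma indSet_gammaIJ_vec {m a b : ℕ} (ha : 1 ≤ a) (hab : a < b) (hb : b ≤ m + 1) :
    indSet (gammaIJ a b) m (vec (m + 1)) = vec m := by
  ext t
  simp only [mem_indSet_gammaIJ, vec, Finset.mem_Icc]
  split_ifs <;> omega

lemma eq_of_indSet_gammaIJ_one_two_eq {m : ℕ} {Q E : Finset ℕ} (hm : 1 ≤ m)
    (hQ : Q ⊆ vec (m + 1)) (h1 : 1 ∉ E) (h2 : 2 ∉ E)
    (h : indSet (gammaIJ 1 2) m Q = indSet (gammaIJ 1 2) m (vec (m + 1) \ E)) :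
    Q = vec (m + 1) \ E ∨ Q = vec (m + 1) \ insert 1 E ∨ Q = vec (m + 1) \ insert 2 E := by
  have h12 : 1 ∈ Q ∨ 2 ∈ Q := by
    simpa [mem_indSet_gammaIJ, vec, h1, hm] using Finset.ext_iff.1 h 1
  have hge : ∀ x, 3 ≤ x → (x ∈ Q ↔ x ∈ vec (m + 1) \ E) := by
    intro x hx
    by_cases hxm : x ≤ m + 1
    · have := Finset.ext_iff.1 h (x - 1)
      simp only [mem_indSet_gammaIJ, Finset.mem_Icc, if_neg (show x - 1 ≠ 1 by omega),
        if_neg (show ¬x - 1 < 2 by omega), Nat.sub_add_cancel (show 1 ≤ x by omega)] at this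
      simpa [show 1 ≤ x - 1 by omega, show x - 1 ≤ m by omega] using this
    · have hxQ : x ∉ Q := fun hxQ => hxm (Finset.mem_Icc.1 (hQ hxQ)).2
      simp [vec, hxQ, hxm]
  have hQ0 : 0 ∉ Q := fun h0 => by simpa [vec] using hQ h0
  by_cases hQ1 : 1 ∈ Q <;> by_cases hQ2 : 2 ∈ Q
  on_goal 4 => tauto
  on_goal 1 => left
  on_goal 2 => right; right
  on_goal 3 => right; left
  all_goals
    ext x
    rcases (show x = 0 ∨ x = 1 ∨ x = 2 ∨ 3 ≤ x by omega) with rfl | rfl | rfl | hx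
    on_goal 4 => simp [hge x hx, show x ≠ 1 by omega, show x ≠ 2 by omega]
    all_goals simp [vec, *]

lemma mem_HPat_one {m l : ℕ} {S : Finset ℕ} :
    S ∈ HPat m 1 l ↔ ∃ d, l ≤ d ∧ d ≤ m ∧ S = vec m \ {d} := by
  constructor
  · rintro ⟨D, hD, hDlm, rfl⟩
    obtain ⟨d, rfl⟩ := Finset.card_eq_one.1 hD
    obtain ⟨hld, hdm⟩ := Finset.mem_Icc.1 (hDlm (Finset.mem_singleton_self d))
    exact ⟨d, hld, hdm, rfl⟩
  · rintro ⟨d, hld, hdm, rfl⟩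
    exact ⟨{d}, Finset.card_singleton d, by simp [hld, hdm], rfl⟩

lemma compl_singleton_mem_HPat_one_iff {m l d : ℕ} (hd : 1 ≤ d) (hdm : d ≤ m) :
    vec m \ {d} ∈ HPat m 1 l ↔ l ≤ d := by
  refine mem_HPat_one.trans ⟨fun ⟨d', hld', _, h⟩ => ?_, fun hld => ⟨d, hld, hdm, rfl⟩⟩
  have := Finset.ext_iff.1 h d
  simp only [vec, Finset.mem_sdiff, Finset.mem_Icc, Finset.mem_singleton, not_true_eq_false,
    and_false, false_iff, not_and, Decidable.not_not, and_imp] at this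
  omega

lemma compl_singleton_mem_iff_of_inter_HPat_one {m e c : ℕ} {𝒬 : Set (Finset ℕ)}
    (h𝒬 : 𝒬 ∩ HPat m 1 1 = HPat m 1 e) (hc : 1 ≤ c) (hcm : c ≤ m) :
    vec m \ {c} ∈ 𝒬 ↔ e ≤ c := by
  rw [← compl_singleton_mem_HPat_one_iff hc hcm, ← h𝒬, Set.mem_inter_iff,
    compl_singleton_mem_HPat_one_iff hc hcm, and_iff_left hc]

lemma indPat_gammaIJ_eq_of_isStable {m a b c d : ℕ} {P : Set (Finset ℕ)}
    (hst : IsStable (m + 1) (m + 1) P) (hm : 2 ≤ m) (ha : 1 ≤ a) (hab : a < b)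
    (hb : b ≤ m + 1) (hc : 1 ≤ c) (hcd : c < d) (hd : d ≤ m + 1) :
    indPat (gammaIJ a b) m P = indPat (gammaIJ c d) m P :=
  hst m hm (by omega) _ _ (isNOP_gammaIJ ha hab hb) (isNOP_gammaIJ hc hcd hd)

section StableLift

variable {m e : ℕ} {P : Set (Finset ℕ)}

lemma compl_singleton_mem_indPat_gammaIJ_iff {a b c : ℕ} (hst : IsStable (m + 1) (m + 1) P)
    (hH : indPat (gammaIJ m (m + 1)) m P ∩ HPat m 1 1 = HPat m 1 e) (hm : 2 ≤ m)
    (ha : 1 ≤ a) (hab : a < b) (hb : b ≤ m + 1) (hc : 1 ≤ c) (hcm : c ≤ m) :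
    vec m \ {c} ∈ indPat (gammaIJ a b) m P ↔ e ≤ c := by
  rw [indPat_gammaIJ_eq_of_isStable hst hm ha hab hb (by omega : 1 ≤ m) (lt_add_one m) le_rfl]
  exact compl_singleton_mem_iff_of_inter_HPat_one hH hc hcm

lemma le_of_compl_singleton_mem {d : ℕ} (hst : IsStable (m + 1) (m + 1) P)
    (hH : indPat (gammaIJ m (m + 1)) m P ∩ HPat m 1 1 = HPat m 1 e) (he3 : 3 ≤ e) (hem : e ≤ m)
    (hd : 1 ≤ d) (hdm : d ≤ m + 1) (hdP : vec (m + 1) \ {d} ∈ P) : e + 1 ≤ d := by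
  rcases Nat.lt_or_ge d 3 with hd3 | hd3
  · have := (compl_singleton_mem_indPat_gammaIJ_iff hst hH (by omega) (by omega) (lt_add_one m)
      le_rfl hd (by omega)).1
      ⟨_, hdP, indSet_gammaIJ_compl_singleton_of_lt (by omega) (by omega)⟩
    omega
  · have := (compl_singleton_mem_indPat_gammaIJ_iff hst hH (by omega) le_rfl one_lt_two
      (by omega) (by omega) (by omega)).1
      ⟨_, hdP, indSet_gammaIJ_compl_singleton_of_gt one_lt_two (by omega) hdm⟩
    omega

lemma compl_pair_notMem {a b : ℕ} (hst : IsStable (m + 1) (m + 1) P)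
    (hH : indPat (gammaIJ m (m + 1)) m P ∩ HPat m 1 1 = HPat m 1 e) (hm : 2 ≤ m)
    (ha : 1 ≤ a) (hae : a < e) (hab : a < b) (hb : b ≤ m + 1) :
    vec (m + 1) \ {a, b} ∉ P := fun habP => by
  have := (compl_singleton_mem_indPat_gammaIJ_iff hst hH hm ha hab hb ha (by omega)).1
    ⟨_, habP, indSet_gammaIJ_compl_pair hab⟩
  omega

lemma compl_singleton_mem_of_le {d : ℕ} (hP : IsPattern (m + 1) P)
    (hst : IsStable (m + 1) (m + 1) P)
    (hH : indPat (gammaIJ m (m + 1)) m P ∩ HPat m 1 1 = HPat m 1 e) (he3 : 3 ≤ e) (hem : e ≤ m)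
    (hd : e + 1 ≤ d) (hdm : d ≤ m + 1) : vec (m + 1) \ {d} ∈ P := by
  obtain ⟨Q, hQP, hQ⟩ := (compl_singleton_mem_indPat_gammaIJ_iff hst hH (by omega) le_rfl
    one_lt_two (by omega) (by omega : 1 ≤ d - 1) (by omega)).2 (by omega)
  rw [← indSet_gammaIJ_compl_singleton_of_gt one_lt_two (by omega) hdm] at hQ
  rcases eq_of_indSet_gammaIJ_one_two_eq (by omega) (hP.2 Q hQP).2
    (by rw [Finset.mem_singleton]; omega) (by rw [Finset.mem_singleton]; omega) hQ
    with rfl | rfl | rfl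
  · exact hQP
  · exact absurd hQP (compl_pair_notMem hst hH (by omega) le_rfl (by omega) (by omega) hdm)
  · exact absurd hQP (compl_pair_notMem hst hH (by omega) one_le_two (by omega) (by omega) hdm)

lemma vec_succ_mem_of_vec_mem_indPat (hP : IsPattern (m + 1) P)
    (hst : IsStable (m + 1) (m + 1) P)
    (hH : indPat (gammaIJ m (m + 1)) m P ∩ HPat m 1 1 = HPat m 1 e) (he3 : 3 ≤ e) (hem : e ≤ m)
    (hvec : vec m ∈ indPat (gammaIJ m (m + 1)) m P) : vec (m + 1) ∈ P := by
  rw [indPat_gammaIJ_eq_of_isStable hst (by omega) (by omega) (lt_add_one m) le_rfl le_rfl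
    one_lt_two (by omega)] at hvec
  obtain ⟨Q, hQP, hQ⟩ := hvec
  rw [← indSet_gammaIJ_vec le_rfl one_lt_two (by omega), ← Finset.sdiff_empty (s := vec (m + 1))]
    at hQ
  rcases eq_of_indSet_gammaIJ_one_two_eq (by omega) (hP.2 Q hQP).2 (Finset.notMem_empty 1)
    (Finset.notMem_empty 2) hQ with rfl | rfl | rfl
  · rwa [Finset.sdiff_empty] at hQP
  · have := le_of_compl_singleton_mem hst hH he3 hem le_rfl (by omega) hQP
    omega
  · have := le_of_compl_singleton_mem hst hH he3 hem one_le_two (by omega) hQP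
    omega

end StableLift

theorem stmt3 (m e : ℕ) (he3 : 3 ≤ e) (hem : e ≤ m)
    (P : Set (Finset ℕ)) (hP : IsPattern (m + 1) P) (hst : IsStable (m + 1) (m + 1) P)
    (hH : indPat (gammaIJ m (m + 1)) m P ∩ HPat m 1 1 = HPat m 1 e) :
    P ∩ HPat (m + 1) 1 1 = HPat (m + 1) 1 (e + 1) ∧
    (vec m ∈ indPat (gammaIJ m (m + 1)) m P → vec (m + 1) ∈ P) := by
  refine ⟨Set.ext fun S => ?_, vec_succ_mem_of_vec_mem_indPat hP hst hH he3 hem⟩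
  simp only [Set.mem_inter_iff, mem_HPat_one]
  constructor
  · rintro ⟨hSP, d, hd, hdm, rfl⟩
    exact ⟨d, le_of_compl_singleton_mem hst hH he3 hem hd hdm hSP, hdm, rfl⟩
  · rintro ⟨d, hd, hdm, rfl⟩
    exact ⟨compl_singleton_mem_of_le hP hst hH he3 hem hd hdm, d, by omega, hdm, rfl⟩
end

section
/- For every m ≥ 2 and every 1 ≤ j ≤ m, the m-pattern A¹_{j,m} is m-stable; moreover, for every γ ∈ Π(m,m-1), (A¹_{j,m})_γ = A¹_{j,m-1} when j ≤ m-1, and (A¹_{m,m})_γ = A¹_{m-1,m-1}. -/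
open Finset

/-!
Every naturally ordered partition `C₁, …, C_k` of `{1, …, m}` has `1 ∈ C₁`, so `P_γ ∋ 1` whenever
`1 ∈ P`, and `|P_γ| ≤ |P|` because the blocks are disjoint. Conversely every `T ∋ 1` in `{1, …, k}`
is `P_γ` for the set `P` of chosen representatives of the blocks indexed by `T`, taking `1` for
`C₁`. Hence `(A¹_{j,m})_γ = A¹_{min j k, k}` for every `γ ∈ Π(m, k)`, independently of `γ`.
-/

variable {m k : ℕ} {C : ℕ → Finset ℕ}

lemma IsNOP.subset_Icc (hC : IsNOP m k C) {i : ℕ} (hi : i ∈ Icc 1 k) : C i ⊆ Icc 1 m := by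
  rw [← hC.2.2.1]
  exact subset_biUnion_of_mem C hi

lemma IsNOP.pairwiseDisjoint (hC : IsNOP m k C) : (Icc 1 k : Set ℕ).PairwiseDisjoint C :=
  fun i hi j hj hij => hC.2.1 i (mem_coe.1 hi) j (mem_coe.1 hj) hij

lemma IsNOP.one_mem (hC : IsNOP m k C) (hk : 1 ≤ k) : 1 ∈ C 1 := by
  have h1k : 1 ∈ Icc 1 k := mem_Icc.2 ⟨le_rfl, hk⟩
  have hC1 : ∀ y ∈ C 1, 1 ≤ y ∧ y ≤ m := fun y hy => mem_Icc.1 (hC.subset_Icc h1k hy)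
  obtain ⟨x, hx⟩ := hC.1 1 h1k
  have h1m : 1 ∈ (Icc 1 k).biUnion C := by
    rw [hC.2.2.1]
    exact mem_Icc.2 ⟨le_rfl, (hC1 x hx).1.trans (hC1 x hx).2⟩
  obtain ⟨i, hi, h1i⟩ := mem_biUnion.1 h1m
  obtain rfl | hlt := (mem_Icc.1 hi).1.eq_or_lt
  · exact h1i
  · have hmin : ((1 : ℕ) : WithTop ℕ) ≤ (C 1).min :=
      Finset.le_min fun y hy => WithTop.coe_le_coe.2 (hC1 y hy).1
    exact absurd ((hC.2.2.2 1 h1k i hi hlt).trans_le (min_le h1i)) hmin.not_gt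

lemma card_indSet_le (hC : (Icc 1 k : Set ℕ).PairwiseDisjoint C) (P : Finset ℕ) :
    #(indSet C k P) ≤ #P :=
  calc #(indSet C k P) ≤ #((indSet C k P).biUnion fun t => C t ∩ P) := by
        refine card_le_card_biUnion ((hC.subset ?_).mono fun t => inter_subset_left)
          fun t ht => (mem_filter.1 ht).2
        exact coe_subset.2 (filter_subset _ _)
    _ ≤ #P := card_le_card (biUnion_subset.2 fun t _ => inter_subset_right)

lemma indSet_image_of_mem (hC : (Icc 1 k : Set ℕ).PairwiseDisjoint C) {T : Finset ℕ}
    (hT : T ⊆ Icc 1 k) {g : ℕ → ℕ} (hg : ∀ t ∈ T, g t ∈ C t) : indSet C k (T.image g) = T := by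
  ext t
  simp only [indSet, mem_filter, Finset.Nonempty, mem_inter, mem_image]
  constructor
  · rintro ⟨ht, _, hxC, s, hs, rfl⟩
    exact hC.elim_finset ht (hT hs) _ hxC (hg s hs) ▸ hs
  · exact fun ht => ⟨hT ht, g t, hg t ht, t, ht, rfl⟩

theorem indPat_A1Pat (j : ℕ) (hC : IsNOP m k C) (hk : 1 ≤ k) :
    indPat C k (A1Pat j m) = A1Pat (min j k) k := by
  have h1k : 1 ∈ Icc 1 k := mem_Icc.2 ⟨le_rfl, hk⟩
  ext T
  constructor
  · rintro ⟨P, ⟨hP1, -, hPj⟩, rfl⟩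
    refine ⟨mem_filter.2 ⟨h1k, 1, mem_inter.2 ⟨hC.one_mem hk, hP1⟩⟩, filter_subset _ _, ?_⟩
    exact le_min ((card_indSet_le hC.pairwiseDisjoint P).trans hPj)
      ((card_filter_le _ _).trans (by simp))
  · rintro ⟨hT1, hTk, hTj⟩
    have hrep : ∀ t ∈ Icc 1 k, ∃ x ∈ C t, t = 1 → x = 1 := by
      intro t ht
      obtain rfl | ht1 := eq_or_ne t 1
      · exact ⟨1, hC.one_mem hk, fun _ => rfl⟩
      · obtain ⟨x, hx⟩ := hC.1 t ht
        exact ⟨x, hx, fun h => absurd h ht1⟩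
    choose! g hgC hg1 using hrep
    refine ⟨T.image g, ⟨mem_image.2 ⟨1, hT1, hg1 1 h1k rfl⟩, ?_, ?_⟩, ?_⟩
    · exact image_subset_iff.2 fun t ht => hC.subset_Icc (hTk ht) (hgC t (hTk ht))
    · exact card_image_le.trans (hTj.trans (min_le_left _ _))
    · exact indSet_image_of_mem hC.pairwiseDisjoint hTk fun t ht => hgC t (hTk ht)

theorem stmt6_general (m j : ℕ) (hm : 2 ≤ m) :
    IsStable m m (A1Pat j m) ∧
    ∀ γ : ℕ → Finset ℕ, IsNOP m (m - 1) γ →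
      (j ≤ m - 1 → indPat γ (m - 1) (A1Pat j m) = A1Pat j (m - 1)) ∧
      indPat γ (m - 1) (A1Pat m m) = A1Pat (m - 1) (m - 1) := by
  refine ⟨fun k hk _ α β hα hβ => ?_, fun γ hγ => ⟨fun hj => ?_, ?_⟩⟩
  · rw [indPat_A1Pat j hα (by omega), indPat_A1Pat j hβ (by omega)]
  · rw [indPat_A1Pat j hγ (by omega), min_eq_left hj]
  · rw [indPat_A1Pat m hγ (by omega), min_eq_right (Nat.sub_le m 1)]

theorem stmt6 (m j : ℕ) (hm : 2 ≤ m) (hj1 : 1 ≤ j) (hjm : j ≤ m) :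
    IsStable m m (A1Pat j m) ∧
    ∀ γ : ℕ → Finset ℕ, IsNOP m (m - 1) γ →
      (j ≤ m - 1 → indPat γ (m - 1) (A1Pat j m) = A1Pat j (m - 1)) ∧
      indPat γ (m - 1) (A1Pat m m) = A1Pat (m - 1) (m - 1) :=
  stmt6_general m j hm
end
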